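/- Let N ≥ 1, n ≥ 1 and let f: {0,1}^n → {0,1} be almost balanced. Then the biased system P⁰ is time-ordered non-signalling on Alice's side: for every i ∈ {1,…,n}, for all allowed input strings (u,v) and (u',v) with u_j = u'_j for all j < i, for all y ∈ {0,1}^n and all x_1,…,x_{i−1} ∈ {0,1}: Σ over x_i,…,x_n of P⁰(x,y|u,v) equals Σ over x_i,…,x_n of P⁰(x,y|u',v). -/

import Mathlib

open Finset

/-- `sin²(π/(4N))`. -/
noncomputable def s2 (N : ℕ) : ℝ := Real.sin (Real.pi / (4 * N)) ^ 2

/-- `cos²(π/(4N))`. -/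
noncomputable def c2 (N : ℕ) : ℝ := Real.cos (Real.pi / (4 * N)) ^ 2

/-- The set `G_N` of allowed input pairs: `u ∈ U = {0,2,...,2N-2}`,
`v ∈ V = {1,3,...,2N-1}`, and either `|u-v| = 1` or `(u,v) = (0,2N-1)`. -/
def Allowed (N u v : ℕ) : Prop :=
  Even u ∧ u < 2 * N ∧ Odd v ∧ v < 2 * N ∧
    (v = u + 1 ∨ u = v + 1 ∨ (u = 0 ∧ v = 2 * N - 1))

/-- The single quantum box `Q(x,y|u,v)`: on the input pair `(0,2N-1)` it equals
`sin²(π/(4N))/2` if `x = y` and `cos²(π/(4N))/2` otherwise; on the input pairs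
with `|u-v| = 1` it equals `cos²(π/(4N))/2` if `x = y` and `sin²(π/(4N))/2`
otherwise. -/
noncomputable def Qbox (N : ℕ) (x y : Bool) (u v : ℕ) : ℝ :=
  if u = 0 ∧ v = 2 * N - 1 then (if x = y then s2 N / 2 else c2 N / 2)
  else (if x = y then c2 N / 2 else s2 N / 2)

/-- The allowed input pairs `(u,v) ∈ G_N` with `|u-v| = 1`, as a finite set. -/
def adjPairs (N : ℕ) : Finset (ℕ × ℕ) :=
  (Finset.range (2 * N) ×ˢ Finset.range (2 * N)).filter
    fun p => Even p.1 ∧ Odd p.2 ∧ (p.2 = p.1 + 1 ∨ p.1 = p.2 + 1)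

/-- The chained Bell value
`I_N(R) = R(0,0|0,2N-1) + R(1,1|0,2N-1) + Σ_{(u,v)∈G_N, |u-v|=1} (R(0,1|u,v) + R(1,0|u,v))`. -/
noncomputable def IBell (N : ℕ) (R : Bool → Bool → ℕ → ℕ → ℝ) : ℝ :=
  R false false 0 (2 * N - 1) + R true true 0 (2 * N - 1) +
    ∑ p ∈ adjPairs N, (R false true p.1 p.2 + R true false p.1 p.2)

/-- The biased boxes: `Qbias N false = Q⁰` is biased towards `x = 0` and
`Qbias N true = Q¹` is biased towards `x = 1`, each by shifting probability
`sin²(π/(4N))/2` within every row. -/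
noncomputable def Qbias (N : ℕ) (σ : Bool) (x y : Bool) (u v : ℕ) : ℝ :=
  if x = σ then Qbox N x y u v + s2 N / 2 else Qbox N x y u v - s2 N / 2


/-- `π⁰(s)` for the prefix `s = x_1…x_k`: the fraction, among strings
`z ∈ {0,1}^n` having `x_1…x_k` as a prefix, of those with `f(z) = 0`. -/
noncomputable def piz {n : ℕ} (f : (Fin n → Bool) → Bool) (k : ℕ)
    (x : Fin n → Bool) : ℝ :=
  ((Finset.univ.filter fun z : Fin n → Bool =>
      (∀ j : Fin n, (j : ℕ) < k → z j = x j) ∧ f z = false).card : ℝ) / 2 ^ (n - k)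

/-- `Δ_i(x_1…x_{i-1}) = |π⁰(x_1…x_{i-1}0) - π⁰(x_1…x_{i-1}1)|` (the index `i`
is 0-based here, so the prefix consists of the coordinates `j < i`). -/
noncomputable def Del {n : ℕ} (f : (Fin n → Bool) → Bool) (i : Fin n)
    (x : Fin n → Bool) : ℝ :=
  |piz f ((i : ℕ) + 1) (Function.update x i false) -
    piz f ((i : ℕ) + 1) (Function.update x i true)|

/-- `f` is almost balanced: `|Pr_x[f(x)=0] - Pr_x[f(x)=1]| ≤ 1/3` over
uniformly random `x ∈ {0,1}^n`. -/
def AlmostBalanced {n : ℕ} (f : (Fin n → Bool) → Bool) : Prop :=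
  |((Finset.univ.filter fun x : Fin n → Bool => f x = false).card : ℝ) / 2 ^ n -
    ((Finset.univ.filter fun x : Fin n → Bool => f x = true).card : ℝ) / 2 ^ n| ≤ 1 / 3

open Classical in
/-- The pivotal index `i(x)`: the least `i` with `Δ_i(x_1…x_{i-1}) ≥ 2/(3n)`
(junk value if none exists). -/
noncomputable def pivot {n : ℕ} (hn : 0 < n) (f : (Fin n → Bool) → Bool)
    (x : Fin n → Bool) : Fin n :=
  if h : ∃ i : Fin n, Del f i x ≥ 2 / (3 * n) then
    Fin.find (fun i : Fin n => Del f i x ≥ 2 / (3 * n)) h else ⟨0, hn⟩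

/-- The bias direction `σ(x)`: `0` if `π⁰(x_1…x_{i(x)-1}0) > π⁰(x_1…x_{i(x)-1}1)`
and `1` otherwise. -/
noncomputable def sig {n : ℕ} (hn : 0 < n) (f : (Fin n → Bool) → Bool)
    (x : Fin n → Bool) : Bool :=
  if piz f ((pivot hn f x : ℕ) + 1) (Function.update x (pivot hn f x) false) >
      piz f ((pivot hn f x : ℕ) + 1) (Function.update x (pivot hn f x) true)
  then false else true


/-- An allowed input string: componentwise allowed input pairs `(u_j, v_j) ∈ G_N`. -/
def AllowedStr (N : ℕ) {n : ℕ} (u v : Fin n → ℕ) : Prop :=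
  ∀ j : Fin n, Allowed N (u j) (v j)

/-- The `n`-fold product quantum system
`P(x,y|u,v) = ∏_j Q(x_j,y_j|u_j,v_j)`. -/
noncomputable def Pprod (N : ℕ) {n : ℕ} (x y : Fin n → Bool) (u v : Fin n → ℕ) : ℝ :=
  ∏ j : Fin n, Qbox N (x j) (y j) (u j) (v j)

/-- The biased `n`-box systems: `Pbias N hn f false = P⁰` biases the pivotal
subsystem of `x` in direction `σ(x)`, and `Pbias N hn f true = P¹` biases it
in direction `1 - σ(x)`; all the non-pivotal subsystems are the unbiased `Q`. -/
noncomputable def Pbias (N : ℕ) {n : ℕ} (hn : 0 < n) (f : (Fin n → Bool) → Bool)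
    (flip : Bool) (x y : Fin n → Bool) (u v : Fin n → ℕ) : ℝ :=
  Qbias N (xor (sig hn f x) flip) (x (pivot hn f x)) (y (pivot hn f x))
      (u (pivot hn f x)) (v (pivot hn f x)) *
    ∏ j ∈ Finset.univ.erase (pivot hn f x), Qbox N (x j) (y j) (u j) (v j)

/-!
`P⁰(x, y | u, v)` is a product `∏ⱼ hⱼ(x)` of boxes, the `j`-th one biased exactly when `j` is
the pivotal index of `x`. Whether `j` is pivotal, and the bias direction, are read off
`x₁ … x_{j-1}`, so `hⱼ` depends on `x` only through `x₁ … xⱼ`, and summing it over `xⱼ` gives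
`1/2` for every input pair. Summing `P⁰` over `xᵢ, …, xₙ` therefore integrates the factors out
from the last one backwards and leaves `2^{-(n-i+1)} ∏_{j<i} hⱼ(x)`, which involves only the
inputs `uⱼ` with `j < i`.

The product form needs a pivotal index to exist: `π⁰` moves by `Δⱼ/2` at step `j` along `x`,
from `Pr[f = 0] ∈ [1/3, 2/3]` to `π⁰(x) ∈ {0, 1}`, so some `Δⱼ ≥ 2/(3n)`.
-/

section Cylinder

variable {n : ℕ} {α : Type*}

lemma update_eqOn_lt_succ {i : Fin n} {x x' : Fin n → α}
    (h : ∀ k : Fin n, (k : ℕ) < i → x k = x' k) (b : α) (k : Fin n) (hk : (k : ℕ) < i + 1) :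
    Function.update x i b k = Function.update x' i b k := by
  rcases eq_or_ne k i with rfl | hne
  · simp
  · rw [Function.update_of_ne hne, Function.update_of_ne hne]
    exact h k (by have := Fin.val_ne_of_ne hne; omega)

lemma filter_val_lt_succ (i : Fin n) :
    univ.filter (fun j : Fin n => (j : ℕ) < i + 1) =
      insert i (univ.filter fun j : Fin n => (j : ℕ) < i) := by
  ext j
  simp only [mem_filter, mem_univ, true_and, mem_insert, Fin.ext_iff]
  omega

variable [Fintype α] [DecidableEq α]

def cylinder (m : ℕ) (x : Fin n → α) : Finset (Fin n → α) :=
  univ.filter fun t => ∀ j : Fin n, (j : ℕ) < m → t j = x j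

lemma mem_cylinder {m : ℕ} {x t : Fin n → α} :
    t ∈ cylinder m x ↔ ∀ j : Fin n, (j : ℕ) < m → t j = x j := by
  simp [cylinder]

lemma cylinder_congr {m : ℕ} {x x' : Fin n → α}
    (h : ∀ j : Fin n, (j : ℕ) < m → x j = x' j) : cylinder m x = cylinder m x' := by
  ext t
  simp only [mem_cylinder]
  exact forall₂_congr fun j hj => by rw [h j hj]

lemma cylinder_top (x : Fin n → α) : cylinder n x = {x} := by
  ext t
  simp [mem_cylinder, funext_iff]

lemma cylinder_succ_update (i : Fin n) (x : Fin n → α) (b : α) :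
    cylinder (i + 1) (Function.update x i b) = (cylinder i x).filter (· i = b) := by
  ext t
  simp only [mem_filter, mem_cylinder]
  constructor
  · intro h
    refine ⟨fun k hk => ?_, by simpa using h i (by omega)⟩
    rw [h k (by omega), Function.update_of_ne (Fin.ne_of_val_ne hk.ne)]
  · rintro ⟨h, rfl⟩ k hk
    rcases eq_or_ne k i with rfl | hne
    · simp
    · rw [Function.update_of_ne hne]
      exact h k (by have := Fin.val_ne_of_ne hne; omega)

lemma sum_cylinder_eq_sum_sum_cylinder_succ {M : Type*} [AddCommMonoid M] (i : Fin n)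
    (x : Fin n → α) (F : (Fin n → α) → M) :
    ∑ t ∈ cylinder i x, F t = ∑ b, ∑ t ∈ cylinder (i + 1) (Function.update x i b), F t := by
  simp_rw [cylinder_succ_update]
  exact (sum_fiberwise _ _ _).symm

theorem sum_cylinder_prod_of_causal {R : Type*} [CommSemiring R] (h : Fin n → (Fin n → α) → R)
    (c : R) (h_causal : ∀ j : Fin n, ∀ x x' : Fin n → α,
      (∀ k : Fin n, k ≤ j → x k = x' k) → h j x = h j x')
    (h_sum : ∀ j x, ∑ b, h j (Function.update x j b) = c) {m : ℕ} (hm : m ≤ n)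
    (x : Fin n → α) :
    ∑ t ∈ cylinder m x, ∏ j, h j t =
      c ^ (n - m) * ∏ j ∈ univ.filter (fun j : Fin n => (j : ℕ) < m), h j x := by
  induction hm using Nat.decreasingInduction generalizing x with
  | self =>
    rw [cylinder_top, sum_singleton, Nat.sub_self, pow_zero, one_mul,
      filter_true_of_mem fun j _ => j.isLt]
  | of_succ m hm ih =>
    set i : Fin n := ⟨m, hm⟩
    have h_prefix : ∀ b, ∏ j ∈ univ.filter (fun j : Fin n => (j : ℕ) < m),
        h j (Function.update x i b) = ∏ j ∈ univ.filter (fun j : Fin n => (j : ℕ) < m), h j x :=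
      fun b => prod_congr rfl fun j hj => h_causal j _ _ fun k hk =>
        Function.update_of_ne
          (Fin.ne_of_lt (hk.trans_lt (Fin.lt_def.mpr (mem_filter.mp hj).2))) _ _
    calc ∑ t ∈ cylinder m x, ∏ j, h j t
        = ∑ b, c ^ (n - (m + 1)) * (h i (Function.update x i b) *
            ∏ j ∈ univ.filter (fun j : Fin n => (j : ℕ) < m), h j x) := by
          rw [sum_cylinder_eq_sum_sum_cylinder_succ i]
          refine sum_congr rfl fun b _ => ?_
          rw [ih, filter_val_lt_succ i, prod_insert (by simp), h_prefix]
      _ = c ^ (n - m) * ∏ j ∈ univ.filter (fun j : Fin n => (j : ℕ) < m), h j x := by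
          rw [← mul_sum, ← sum_mul, h_sum, ← mul_assoc, ← pow_succ, Nat.sub_add_eq,
            Nat.sub_add_cancel (Nat.sub_pos_of_lt hm)]

end Cylinder

lemma Qbox_false_add_Qbox_true (N : ℕ) (y : Bool) (u v : ℕ) :
    Qbox N false y u v + Qbox N true y u v = 1 / 2 := by
  have h : s2 N + c2 N = 1 := Real.sin_sq_add_cos_sq _
  cases y <;> simp only [Qbox] <;> split_ifs <;> simp_all <;> linarith

lemma Qbias_false_add_Qbias_true (N : ℕ) (σ y : Bool) (u v : ℕ) :
    Qbias N σ false y u v + Qbias N σ true y u v = 1 / 2 := by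
  have h := Qbox_false_add_Qbox_true N y u v
  cases σ <;> simp [Qbias] <;> linarith

section Prefix

variable {n : ℕ} (f : (Fin n → Bool) → Bool)

lemma piz_eq_card_div (k : ℕ) (x : Fin n → Bool) :
    piz f k x = #((cylinder k x).filter fun z => f z = false) / 2 ^ (n - k) := by
  rw [piz, cylinder, filter_filter]

lemma piz_congr {k : ℕ} {x x' : Fin n → Bool} (h : ∀ j : Fin n, (j : ℕ) < k → x j = x' j) :
    piz f k x = piz f k x' := by
  rw [piz_eq_card_div, piz_eq_card_div, cylinder_congr h]

lemma piz_zero (x : Fin n → Bool) :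
    piz f 0 x = #(univ.filter fun z => f z = false) / 2 ^ n := by
  simp [piz]

lemma piz_top (x : Fin n → Bool) : piz f n x = if f x = false then 1 else 0 := by
  rw [piz_eq_card_div, cylinder_top]
  split_ifs with hfx <;> simp [filter_singleton, hfx]

lemma piz_eq_average (i : Fin n) (x : Fin n → Bool) :
    piz f i x = (piz f (i + 1) (Function.update x i false) +
      piz f (i + 1) (Function.update x i true)) / 2 := by
  have h_card : (#((cylinder i x).filter fun z => f z = false) : ℝ) =
      ∑ b, (#((cylinder (i + 1) (Function.update x i b)).filter fun z => f z = false) : ℝ) := by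
    simp_rw [card_filter]
    push_cast
    exact sum_cylinder_eq_sum_sum_cylinder_succ i x _
  have h_pow : (2 : ℝ) ^ (n - i) = 2 ^ (n - (i + 1)) * 2 := by
    rw [← pow_succ]
    congr 1
    omega
  simp only [piz_eq_card_div, h_card, Fintype.sum_bool, h_pow]
  field_simp
  ring

lemma Del_congr (i : Fin n) {x x' : Fin n → Bool}
    (h : ∀ j : Fin n, (j : ℕ) < i → x j = x' j) : Del f i x = Del f i x' := by
  simp only [Del, piz_congr f (update_eqOn_lt_succ h _)]

lemma abs_piz_succ_sub_piz (i : Fin n) (x : Fin n → Bool) :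
    |piz f (i + 1) x - piz f i x| = Del f i x / 2 := by
  have hx : piz f (i + 1) x = piz f (i + 1) (Function.update x i (x i)) := by
    rw [Function.update_eq_self]
  rw [piz_eq_average, Del, hx]
  cases x i
  · rw [show ∀ p q : ℝ, p - (p + q) / 2 = (p - q) / 2 by intros; ring, abs_div, abs_two]
  · rw [show ∀ p q : ℝ, q - (p + q) / 2 = -((p - q) / 2) by intros; ring, abs_neg, abs_div,
      abs_two]

end Prefix

section Pivot

variable {n : ℕ} (f : (Fin n → Bool) → Bool)

lemma one_third_le_abs_piz_top_sub_piz_zero (hf : AlmostBalanced f) (x : Fin n → Bool) :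
    1 / 3 ≤ |piz f n x - piz f 0 x| := by
  have h_card : (#(univ.filter fun z => f z = false) : ℝ) +
      #(univ.filter fun z => f z = true) = 2 ^ n := by
    rw [← Nat.cast_add, ← card_union_of_disjoint (disjoint_filter.2 fun z _ h => by simp [h]),
      ← filter_or]
    simp
  have h_zero := piz_zero f x
  have h_top := piz_top f x
  rw [AlmostBalanced, ← h_zero, show (#(univ.filter fun z => f z = true) : ℝ) / 2 ^ n =
    1 - piz f 0 x by rw [h_zero]; field_simp; linarith, abs_le] at hf
  split_ifs at h_top <;> rw [h_top, le_abs] <;> [left; right] <;> linarith [hf.1, hf.2]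

lemma abs_piz_top_sub_piz_zero_le (x : Fin n → Bool) :
    |piz f n x - piz f 0 x| ≤ ∑ i : Fin n, Del f i x / 2 := by
  rw [← sum_range_sub (fun k => piz f k x), ← Fin.sum_univ_eq_sum_range]
  exact (abs_sum_le_sum_abs _ _).trans_eq (sum_congr rfl fun i _ => abs_piz_succ_sub_piz f i x)

lemma exists_Del_ge (hn : 0 < n) (hf : AlmostBalanced f) (x : Fin n → Bool) :
    ∃ i : Fin n, Del f i x ≥ 2 / (3 * n) := by
  by_contra! h
  have h_sum : ∑ i : Fin n, Del f i x / 2 < 1 / 3 :=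
    calc ∑ i : Fin n, Del f i x / 2
        < ∑ _i : Fin n, 2 / (3 * n : ℝ) / 2 :=
          sum_lt_sum_of_nonempty ⟨⟨0, hn⟩, mem_univ _⟩ fun i _ =>
            div_lt_div_of_pos_right (h i) two_pos
      _ = 1 / 3 := by
          rw [sum_const, card_univ, Fintype.card_fin, nsmul_eq_mul]
          field_simp
  linarith [one_third_le_abs_piz_top_sub_piz_zero f hf x, abs_piz_top_sub_piz_zero_le f x]

end Pivot

section Factor

variable {n : ℕ} (f : (Fin n → Bool) → Bool)

def IsPivotAt (i : Fin n) (x : Fin n → Bool) : Prop :=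
  Del f i x ≥ 2 / (3 * n) ∧ ∀ q < i, ¬Del f q x ≥ 2 / (3 * n)

noncomputable def biasDir (i : Fin n) (x : Fin n → Bool) : Bool :=
  if piz f (i + 1) (Function.update x i false) > piz f (i + 1) (Function.update x i true)
  then false else true

lemma pivot_eq_iff (hn : 0 < n) (hf : AlmostBalanced f) {x : Fin n → Bool} {i : Fin n} :
    pivot hn f x = i ↔ IsPivotAt f i x := by
  rw [pivot, dif_pos (exists_Del_ge f hn hf x), Fin.find_eq_iff]
  rfl

variable {f}

lemma isPivotAt_congr {i : Fin n} {x x' : Fin n → Bool}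
    (h : ∀ k : Fin n, (k : ℕ) < i → x k = x' k) : IsPivotAt f i x ↔ IsPivotAt f i x' := by
  rw [IsPivotAt, IsPivotAt, Del_congr f i h]
  exact and_congr_right' <| forall₂_congr fun q hq => by
    rw [Del_congr f q fun k hk => h k (hk.trans (Fin.lt_def.mp hq))]

lemma biasDir_congr {i : Fin n} {x x' : Fin n → Bool}
    (h : ∀ k : Fin n, (k : ℕ) < i → x k = x' k) : biasDir f i x = biasDir f i x' := by
  simp only [biasDir, piz_congr f (update_eqOn_lt_succ h _)]

variable (f)

open Classical in
noncomputable def pivotFactor (N : ℕ) (y : Fin n → Bool) (u v : Fin n → ℕ) (j : Fin n)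
    (x : Fin n → Bool) : ℝ :=
  if IsPivotAt f j x then Qbias N (biasDir f j x) (x j) (y j) (u j) (v j)
  else Qbox N (x j) (y j) (u j) (v j)

lemma Pbias_false_eq_prod_pivotFactor (N : ℕ) (hn : 0 < n) (hf : AlmostBalanced f)
    (x y : Fin n → Bool) (u v : Fin n → ℕ) :
    Pbias N hn f false x y u v = ∏ j, pivotFactor f N y u v j x := by
  rw [← mul_prod_erase univ _ (mem_univ (pivot hn f x)), Pbias]
  congr 1
  · simp [pivotFactor, (pivot_eq_iff f hn hf).mp rfl, sig, biasDir]
  · refine prod_congr rfl fun j hj => ?_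
    rw [pivotFactor, if_neg fun h => (mem_erase.mp hj).1 ((pivot_eq_iff f hn hf).mpr h).symm]

lemma pivotFactor_congr (N : ℕ) (y : Fin n → Bool) (u v : Fin n → ℕ) (j : Fin n)
    {x x' : Fin n → Bool} (h : ∀ k ≤ j, x k = x' k) :
    pivotFactor f N y u v j x = pivotFactor f N y u v j x' := by
  have h_lt : ∀ k : Fin n, (k : ℕ) < j → x k = x' k := fun k hk => h k (Fin.lt_def.mpr hk).le
  rw [pivotFactor, pivotFactor, isPivotAt_congr h_lt, biasDir_congr h_lt, h j le_rfl]

lemma sum_pivotFactor_update (N : ℕ) (y : Fin n → Bool) (u v : Fin n → ℕ) (j : Fin n)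
    (x : Fin n → Bool) : ∑ b, pivotFactor f N y u v j (Function.update x j b) = 1 / 2 := by
  have h_lt (b : Bool) (k : Fin n) (hk : (k : ℕ) < j) : Function.update x j b k = x k :=
    Function.update_of_ne (Fin.ne_of_lt (Fin.lt_def.mpr hk)) _ _
  rw [Fintype.sum_bool, pivotFactor, pivotFactor, isPivotAt_congr (h_lt _),
    isPivotAt_congr (h_lt _), biasDir_congr (h_lt _), biasDir_congr (h_lt _)]
  simp only [Function.update_self]
  split_ifs
  · rw [add_comm, Qbias_false_add_Qbias_true]
  · rw [add_comm, Qbox_false_add_Qbox_true]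

end Factor

theorem biased_system_time_ordered_non_signalling_alice_general (N n : ℕ)
    (hn : 0 < n) (f : (Fin n → Bool) → Bool) (hf : AlmostBalanced f) :
    ∀ i : Fin n, ∀ u u' v : Fin n → ℕ, AllowedStr N u v → AllowedStr N u' v →
      (∀ j : Fin n, j < i → u j = u' j) → ∀ y x : Fin n → Bool,
      ∑ t ∈ Finset.univ.filter (fun t : Fin n → Bool => ∀ j : Fin n, j < i → t j = x j),
          Pbias N hn f false t y u v =
        ∑ t ∈ Finset.univ.filter (fun t : Fin n → Bool => ∀ j : Fin n, j < i → t j = x j),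
          Pbias N hn f false t y u' v := by
  intro i u u' v _ _ h_prefix y x
  have h_cylinder : univ.filter (fun t : Fin n → Bool => ∀ j : Fin n, j < i → t j = x j) =
      cylinder i x := by
    simp only [cylinder, Fin.lt_def]
  have h_marginal (w : Fin n → ℕ) : ∑ t ∈ cylinder i x, Pbias N hn f false t y w v =
      (1 / 2) ^ (n - i) * ∏ j ∈ univ.filter (fun j : Fin n => (j : ℕ) < i),
        pivotFactor f N y w v j x := by
    simp only [Pbias_false_eq_prod_pivotFactor f N hn hf]
    exact sum_cylinder_prod_of_causal _ _ (fun j _ _ => pivotFactor_congr f N y w v j)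
      (sum_pivotFactor_update f N y w v) i.isLt.le x
  rw [h_cylinder, h_marginal, h_marginal]
  congr 1
  refine prod_congr rfl fun j hj => ?_
  rw [pivotFactor, pivotFactor, h_prefix j (Fin.lt_def.mpr (mem_filter.mp hj).2)]

/-- For `N ≥ 1`, `n ≥ 1` and an almost balanced `f`, the biased system `P⁰`
is time-ordered non-signalling on Alice's side: changing Alice's inputs from
coordinate `i` on does not affect the joint distribution of Bob's outputs and
Alice's outputs before `i`. -/
theorem biased_system_time_ordered_non_signalling_alice (N n : ℕ) (hN : 1 ≤ N)
    (hn : 0 < n) (f : (Fin n → Bool) → Bool) (hf : AlmostBalanced f) :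
    ∀ i : Fin n, ∀ u u' v : Fin n → ℕ, AllowedStr N u v → AllowedStr N u' v →
      (∀ j : Fin n, j < i → u j = u' j) → ∀ y x : Fin n → Bool,
      ∑ t ∈ Finset.univ.filter (fun t : Fin n → Bool => ∀ j : Fin n, j < i → t j = x j),
          Pbias N hn f false t y u v =
        ∑ t ∈ Finset.univ.filter (fun t : Fin n → Bool => ∀ j : Fin n, j < i → t j = x j),
          Pbias N hn f false t y u' v :=
  biased_system_time_ordered_non_signalling_alice_general N n hn f hf
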